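/- The matrix |i_{[0,π]}| : ℕ×ℕ → ℝ with entries |i_{[0,π]}(n,m)| (equal to 1/2 on the diagonal, 0 for |n−m| nonzero even, 1/(π|n−m|) for |n−m| odd) does not define a bounded operator on ℓ²(ℕ). -/
import Mathlib


open Real
open scoped ENNReal

/-- The entries `|i_{[0,π]}(n,m)|`. -/
noncomputable def absIX (n m : ℕ) : ℝ :=
  if n = m then 1 / 2
  else if Even ((n : ℤ) - m) then 0
  else 1 / (π * |(n : ℝ) - m|)

lemma absIX_nonneg (n m : ℕ) : 0 ≤ absIX n m := by
  unfold absIX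
  split_ifs with h1 h2
  · norm_num
  · exact le_refl 0
  · positivity

lemma absIX_odd (m k : ℕ) : absIX (m + (2 * k + 1)) m = 1 / (π * (2 * k + 1)) := by
  unfold absIX
  rw [if_neg (by omega), if_neg]
  · congr 2
    push_cast
    rw [abs_of_nonneg (by linarith)]
    ring
  · have : ((m + (2 * k + 1) : ℕ) : ℤ) - (m : ℤ) = 2 * k + 1 := by push_cast; ring
    rw [this]
    simp [Int.even_add_one, parity_simps]

/-- The matrix `|i_{[0,π]}|` does not define a bounded operator on `ℓ²(ℕ)`:
there is no continuous linear map on `ℓ²(ℕ)` whose matrix entries are `|i_{[0,π]}(n,m)|`. -/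
theorem stmt17 :
    ¬ ∃ T : lp (fun _ : ℕ => ℝ) 2 →L[ℝ] lp (fun _ : ℕ => ℝ) 2,
      ∀ n m : ℕ, (T (lp.single 2 m 1)) n = absIX n m := by
  rintro ⟨T, hT⟩
  set A := ‖T‖ with hA
  have hA0 : 0 ≤ A := norm_nonneg T
  -- choose M ≥ 1 with harmonic sum > 4πA
  obtain ⟨M, hMlarge, hM1⟩ : ∃ M : ℕ,
      4 * π * A < ∑ k ∈ Finset.range M, (1 : ℝ) / (k + 1) ∧ 1 ≤ M := by
    have h := Real.tendsto_sum_range_one_div_nat_succ_atTop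
    exact ((h.eventually_gt_atTop (4 * π * A)).and
      (Filter.eventually_ge_atTop 1)).exists
  set N : ℕ := 4 * M with hN
  -- the test vector
  set x : lp (fun _ : ℕ => ℝ) 2 := ∑ m ∈ Finset.range N, lp.single 2 m (1 : ℝ) with hx
  have hx_apply : ∀ i : ℕ, x i = if i < N then 1 else 0 := by
    intro i
    rw [hx, lp.coeFn_sum, Finset.sum_apply]
    by_cases hi : i < N
    · rw [Finset.sum_eq_single i]
      · simp [lp.single_apply, hi]
      · intro b _ hb
        exact lp.single_apply_ne (E := fun _ : ℕ => ℝ) 2 b 1 (Ne.symm hb)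
      · intro h; exact absurd (Finset.mem_range.2 hi) h
    · rw [Finset.sum_eq_zero, if_neg hi]
      intro b hb
      have : i ≠ b := by
        intro h; exact hi (h ▸ Finset.mem_range.1 hb)
      exact lp.single_apply_ne (E := fun _ : ℕ => ℝ) 2 b 1 this
  have htwo : (2 : ℝ≥0∞).toReal = 2 := by norm_num
  have hp2 : 0 < (2 : ℝ≥0∞).toReal := by norm_num
  -- norm of x
  have hxnorm : ‖x‖ ≤ Real.sqrt N := by
    refine lp.norm_le_of_tsum_le hp2 (Real.sqrt_nonneg _) ?_
    have : ∀ i : ℕ, ‖x i‖ ^ (2 : ℝ≥0∞).toReal = if i < N then 1 else 0 := by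
      intro i
      rw [hx_apply i, htwo]
      split_ifs <;> simp
    rw [tsum_congr this, tsum_eq_sum (s := Finset.range N)
      (by intro b hb; rw [if_neg (fun h => hb (Finset.mem_range.2 h))])]
    rw [htwo, Real.rpow_two, Real.sq_sqrt (Nat.cast_nonneg N)]
    simp only [Finset.sum_ite_eq', Finset.sum_boole]
    exact_mod_cast Nat.cast_le.2 ((Finset.card_filter_le _ _).trans (Finset.card_range N).le)
  -- coordinates of T x
  have hTx : ∀ n : ℕ, (T x) n = ∑ m ∈ Finset.range N, absIX n m := by
    intro n
    rw [hx, map_sum, lp.coeFn_sum, Finset.sum_apply]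
    exact Finset.sum_congr rfl fun m _ => hT n m
  set S : ℝ := ∑ n ∈ Finset.range N, (T x) n with hS
  -- upper bound on S
  have hS_sq : S ^ 2 ≤ (N : ℝ) * ((A * Real.sqrt N) ^ 2) := by
    have h1 : S ^ 2 ≤ (∑ n ∈ Finset.range N, (1 : ℝ) ^ 2) *
        ∑ n ∈ Finset.range N, (T x) n ^ 2 := by
      have := Finset.sum_mul_sq_le_sq_mul_sq (Finset.range N)
        (fun _ => (1 : ℝ)) (fun n => (T x) n)
      simpa using this
    have h2 : ∑ n ∈ Finset.range N, (T x) n ^ 2 ≤ ‖T x‖ ^ 2 := by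
      have := lp.sum_rpow_le_norm_rpow hp2 (T x) (Finset.range N)
      rw [htwo] at this
      calc ∑ n ∈ Finset.range N, (T x) n ^ 2
          = ∑ n ∈ Finset.range N, ‖(T x) n‖ ^ (2 : ℝ) := by
            refine Finset.sum_congr rfl fun n _ => ?_
            rw [Real.rpow_two, Real.norm_eq_abs, sq_abs]
        _ ≤ ‖T x‖ ^ (2 : ℝ) := this
        _ = ‖T x‖ ^ 2 := by rw [Real.rpow_two]
    have h3 : ‖T x‖ ≤ A * Real.sqrt N :=
      (T.le_opNorm x).trans (by
        exact mul_le_mul_of_nonneg_left hxnorm hA0)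
    have h4 : ‖T x‖ ^ 2 ≤ (A * Real.sqrt N) ^ 2 := by
      apply pow_le_pow_left₀ (norm_nonneg _) h3
    calc S ^ 2 ≤ (∑ n ∈ Finset.range N, (1 : ℝ) ^ 2) *
          ∑ n ∈ Finset.range N, (T x) n ^ 2 := h1
      _ = (N : ℝ) * ∑ n ∈ Finset.range N, (T x) n ^ 2 := by simp
      _ ≤ (N : ℝ) * ((A * Real.sqrt N) ^ 2) := by
          apply mul_le_mul_of_nonneg_left (h2.trans h4) (Nat.cast_nonneg N)
  have hS_le : S ≤ (N : ℝ) * A := by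
    have hSnn : 0 ≤ S := by
      rw [hS]
      apply Finset.sum_nonneg
      intro n _
      rw [hTx n]
      exact Finset.sum_nonneg fun m _ => absIX_nonneg n m
    have hsq : (A * Real.sqrt N) ^ 2 = A ^ 2 * N := by
      rw [mul_pow, Real.sq_sqrt (Nat.cast_nonneg N)]
    have : S ^ 2 ≤ ((N : ℝ) * A) ^ 2 := by
      nlinarith [hS_sq, hsq]
    nlinarith [this, hSnn, mul_nonneg (Nat.cast_nonneg N : (0:ℝ) ≤ N) hA0]
  -- lower bound on S
  have hrow : ∀ m ∈ Finset.range (2 * M),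
      ∑ k ∈ Finset.range M, (1 : ℝ) / (π * (2 * k + 1)) ≤
        ∑ n ∈ Finset.range N, absIX n m := by
    intro m hm
    have hm' : m < 2 * M := Finset.mem_range.1 hm
    have hinj : Set.InjOn (fun k => m + (2 * k + 1)) (Finset.range M) := by
      intro a _ b _ h
      have : m + (2 * a + 1) = m + (2 * b + 1) := h
      omega
    calc ∑ k ∈ Finset.range M, (1 : ℝ) / (π * (2 * k + 1))
        = ∑ k ∈ Finset.range M, absIX (m + (2 * k + 1)) m := by
          exact Finset.sum_congr rfl fun k _ => (absIX_odd m k).symm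
      _ = ∑ n ∈ (Finset.range M).image (fun k => m + (2 * k + 1)), absIX n m := by
          rw [Finset.sum_image (fun a ha b hb h => hinj ha hb h)]
      _ ≤ ∑ n ∈ Finset.range N, absIX n m := by
          apply Finset.sum_le_sum_of_subset_of_nonneg
          · intro n hn
            obtain ⟨k, hk, rfl⟩ := Finset.mem_image.1 hn
            have := Finset.mem_range.1 hk
            exact Finset.mem_range.2 (by omega)
          · intro n _ _; exact absIX_nonneg n m
  have hharm : (1 : ℝ) / (2 * π) * ∑ k ∈ Finset.range M, (1 : ℝ) / (k + 1) ≤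
      ∑ k ∈ Finset.range M, (1 : ℝ) / (π * (2 * k + 1)) := by
    rw [Finset.mul_sum]
    apply Finset.sum_le_sum
    intro k _
    rw [div_mul_div_comm, one_mul]
    apply div_le_div_of_nonneg_left one_pos.le (by positivity)
    have hk : (0:ℝ) ≤ k := Nat.cast_nonneg k
    nlinarith [pi_pos]
  have hS_ge : (2 * M : ℝ) * ((1 : ℝ) / (2 * π) *
      ∑ k ∈ Finset.range M, (1 : ℝ) / (k + 1)) ≤ S := by
    have hcomm : S = ∑ m ∈ Finset.range N, ∑ n ∈ Finset.range N, absIX n m := by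
      rw [hS]
      rw [show (∑ n ∈ Finset.range N, (T x) n) =
        ∑ n ∈ Finset.range N, ∑ m ∈ Finset.range N, absIX n m from
        Finset.sum_congr rfl fun n _ => hTx n]
      exact Finset.sum_comm
    rw [hcomm]
    calc (2 * M : ℝ) * ((1 : ℝ) / (2 * π) * ∑ k ∈ Finset.range M, (1 : ℝ) / (k + 1))
        ≤ (2 * M : ℝ) * ∑ k ∈ Finset.range M, (1 : ℝ) / (π * (2 * k + 1)) := by
          apply mul_le_mul_of_nonneg_left hharm (by positivity)
      _ = ∑ m ∈ Finset.range (2 * M), ∑ k ∈ Finset.range M,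
            (1 : ℝ) / (π * (2 * k + 1)) := by
          rw [Finset.sum_const, Finset.card_range, nsmul_eq_mul]
          push_cast; ring
      _ ≤ ∑ m ∈ Finset.range (2 * M), ∑ n ∈ Finset.range N, absIX n m :=
          Finset.sum_le_sum hrow
      _ ≤ ∑ m ∈ Finset.range N, ∑ n ∈ Finset.range N, absIX n m := by
          apply Finset.sum_le_sum_of_subset_of_nonneg
          · exact Finset.range_subset_range.2 (by omega)
          · intro m _ _
            exact Finset.sum_nonneg fun n _ => absIX_nonneg n m
  -- contradiction
  have hπ := pi_pos
  have hMpos : (0:ℝ) < M := by exact_mod_cast hM1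
  have hNval : (N : ℝ) = 4 * M := by rw [hN]; push_cast; ring
  rw [hNval] at hS_le
  set H := ∑ k ∈ Finset.range M, (1 : ℝ) / (k + 1) with hH
  have key : (2 * (M:ℝ)) * ((1 : ℝ) / (2 * π) * H) ≤ 4 * M * A := hS_ge.trans hS_le
  have : (M:ℝ) * H / π ≤ 4 * M * A := by
    calc (M:ℝ) * H / π = (2 * M) * ((1:ℝ)/(2*π) * H) := by field_simp
      _ ≤ 4 * M * A := key
  have hcontr : (M:ℝ) * (4 * π * A) < M * H := by
    exact mul_lt_mul_of_pos_left hMlarge hMpos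
  rw [div_le_iff₀ hπ] at this
  nlinarith [this, hcontr]
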